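/- arXiv:1310.1042 — 3 statements merged into one kernel-verified Lean document; each statement's English description precedes it below -/
import Mathlib

section
/- Let G be a bridgeless cubic graph and H a subgraph of G whose resistance is k (i.e., at least k edges must be removed from H to make it properly 3-edge-colourable). Then any cycle of G that is not entirely contained in H misses at least k vertices of H. -/
open SimpleGraph

/-- Two edges (as unordered pairs) share a vertex. -/
def EdgesShare {V : Type*} (e₁ e₂ : Sym2 V) : Prop := ∃ v, v ∈ e₁ ∧ v ∈ e₂

/-- A proper 3-edge-colouring of a simple graph: distinct incident edges get distinct colours. -/
def IsProper3EdgeColoring {V : Type*} (G : SimpleGraph V) (c : Sym2 V → Fin 3) : Prop :=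
  ∀ e₁ ∈ G.edgeSet, ∀ e₂ ∈ G.edgeSet, e₁ ≠ e₂ → EdgesShare e₁ e₂ → c e₁ ≠ c e₂

def Is3EdgeColorable {V : Type*} (G : SimpleGraph V) : Prop :=
  ∃ c, IsProper3EdgeColoring G c

/-- The resistance of a graph: the least number of edges whose removal yields a
properly 3-edge-colourable graph. -/
noncomputable def resistance {V : Type*} (G : SimpleGraph V) : ℕ :=
  sInf {n | ∃ F : Finset (Sym2 V), ↑F ⊆ G.edgeSet ∧ F.card = n ∧
    Is3EdgeColorable (G.deleteEdges ↑F)}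

/-!
Let `T` be the set of vertices of `H` missed by the cycle `C`, and `ab` an edge of `C` outside `H`.
Once every edge of `H` at `T` is deleted, what is left of `H` is spanned by `C`. It is
3-edge-coloured by colouring the path `C - ab` alternately with two colours and giving the third to
the remaining edges, which form a matching because `G` is cubic. The vertices of `T` are then put
back one at a time; by a Kempe-chain argument, putting back a vertex of a subcubic graph costs at
most one deleted edge. Hence deleting at most `|T|` edges makes `H` 3-edge-colourable.
-/

section EdgeColoring

variable {W : Type*} {J : SimpleGraph W}

theorem isProper3EdgeColoring_iff {c : Sym2 W → Fin 3} :
    IsProper3EdgeColoring J c ↔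
      ∀ ⦃x y z⦄, J.Adj x y → J.Adj x z → y ≠ z → c s(x, y) ≠ c s(x, z) := by
  constructor
  · intro hc x y z hy hz hyz
    exact hc _ hy _ hz (fun h => hyz (Sym2.congr_right.1 h)) ⟨x, Sym2.mem_mk_left x y,
      Sym2.mem_mk_left x z⟩
  · rintro hc e₁ h₁ e₂ h₂ hne ⟨x, hx₁, hx₂⟩
    obtain ⟨y, rfl⟩ := Sym2.mem_iff_exists.1 hx₁
    obtain ⟨z, rfl⟩ := Sym2.mem_iff_exists.1 hx₂
    exact hc h₁ h₂ fun h => hne (h ▸ rfl)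

theorem Is3EdgeColorable.of_map {V : Type*} (f : W ↪ V) (h : Is3EdgeColorable (J.map f)) :
    Is3EdgeColorable J := by
  obtain ⟨c, hc⟩ := h
  refine ⟨c ∘ Sym2.map f, isProper3EdgeColoring_iff.2 fun x y z hy hz hyz => ?_⟩
  simpa using isProper3EdgeColoring_iff.1 hc (map_adj_apply.2 hy) (map_adj_apply.2 hz)
    (f.injective.ne hyz)

theorem resistance_le_ncard [Finite W] {F : Set (Sym2 W)} (hF : F ⊆ J.edgeSet)
    (hcol : Is3EdgeColorable (J.deleteEdges F)) : resistance J ≤ F.ncard :=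
  Nat.sInf_le ⟨F.toFinite.toFinset, by simpa using hF, (Set.ncard_eq_toFinset_card F).symm,
    by simpa using hcol⟩

end EdgeColoring

namespace SimpleGraph

variable {W : Type*} {J : SimpleGraph W}

def MissesColor (J : SimpleGraph W) (c : Sym2 W → Fin 3) (x : W) (α : Fin 3) : Prop :=
  ∀ ⦃y⦄, J.Adj x y → c s(x, y) ≠ α

theorem exists_missesColor [Finite W] (c : Sym2 W → Fin 3) {x : W}
    (hx : (J.neighborSet x).ncard ≤ 2) : ∃ α, J.MissesColor c x α := by
  by_contra! h
  simp only [MissesColor, not_forall, not_not] at h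
  have hsurj : Set.univ ⊆ (fun y => c s(x, y)) '' J.neighborSet x := by
    rintro α -
    obtain ⟨y, hy, hα⟩ := h α
    exact ⟨y, hy, hα⟩
  have := (Set.ncard_le_ncard hsurj).trans (Set.ncard_image_le (J.neighborSet x).toFinite)
  simp [Set.ncard_univ] at this
  omega

theorem not_reachable_of_ncard_neighborSet_le_one [Finite W] {D : SimpleGraph W}
    (hD : ∀ t, (D.neighborSet t).ncard ≤ 2) {x y z : W} (hxy : x ≠ y) (hxz : x ≠ z) (hyz : y ≠ z)
    (hx : (D.neighborSet x).ncard ≤ 1) (hy : (D.neighborSet y).ncard ≤ 1)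
    (hz : (D.neighborSet z).ncard ≤ 1) (hrxy : D.Reachable x y) : ¬ D.Reachable x z := by
  intro hrxz
  obtain ⟨p, hp⟩ := (hrxy.symm.trans hrxz).exists_isPath
  have hnil : ¬ p.Nil := fun h => hyz h.eq
  -- every vertex of a path from `y` to `z` already has its full degree on the path
  have hfull : ∀ i ≤ p.length, (D.neighborSet (p.getVert i)).ncard ≤
      (p.toSubgraph.neighborSet (p.getVert i)).ncard := by
    intro i hi
    rcases Nat.eq_zero_or_pos i with rfl | hi0
    · simpa [hp.neighborSet_toSubgraph_startpoint hnil] using hy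
    rcases hi.lt_or_eq with hil | rfl
    · rw [hp.ncard_neighborSet_toSubgraph_internal_eq_two hi0.ne' hil]
      exact hD _
    · simpa [hp.neighborSet_toSubgraph_endpoint hnil] using hz
  have hclosed : ∀ t ∈ p.toSubgraph.verts, ∀ s, D.Adj t s → p.toSubgraph.Adj t s := by
    intro t ht s hs
    obtain ⟨i, rfl, hi⟩ := Walk.mem_support_iff_exists_getVert.1 (p.mem_verts_toSubgraph.1 ht)
    have heq := Set.eq_of_subset_of_ncard_le (p.toSubgraph.neighborSet_subset _) (hfull i hi)
    change s ∈ p.toSubgraph.neighborSet _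
    rwa [heq]
  have hxp := hrxy.symm.mem_subgraphVerts hclosed p.start_mem_verts_toSubgraph
  obtain ⟨i, rfl, hi⟩ := Walk.mem_support_iff_exists_getVert.1 (p.mem_verts_toSubgraph.1 hxp)
  have hi0 : i ≠ 0 := by rintro rfl; exact hxy p.getVert_zero
  have hil : i < p.length := hi.lt_of_ne (by rintro rfl; exact hxz p.getVert_length)
  have := Set.ncard_le_ncard (p.toSubgraph.neighborSet_subset (p.getVert i))
  rw [hp.ncard_neighborSet_toSubgraph_internal_eq_two hi0 hil] at this
  omega

/-- The connected components of this graph are the `(α, β)`-Kempe chains of `c`. -/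
def kempeGraph (J : SimpleGraph W) (c : Sym2 W → Fin 3) (α β : Fin 3) : SimpleGraph W where
  Adj x y := J.Adj x y ∧ (c s(x, y) = α ∨ c s(x, y) = β)
  symm.symm x y h := by rwa [J.adj_comm, Sym2.eq_swap]
  loopless.irrefl x h := h.1.ne rfl

@[simp]
theorem kempeGraph_adj {c : Sym2 W → Fin 3} {α β : Fin 3} {x y : W} :
    (J.kempeGraph c α β).Adj x y ↔ J.Adj x y ∧ (c s(x, y) = α ∨ c s(x, y) = β) :=
  Iff.rfl

variable {c : Sym2 W → Fin 3} {α β : Fin 3}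

theorem ncard_neighborSet_kempeGraph_le (hc : IsProper3EdgeColoring J c) {x : W}
    {S : Set (Fin 3)} (hS : ∀ y, (J.kempeGraph c α β).Adj x y → c s(x, y) ∈ S) :
    ((J.kempeGraph c α β).neighborSet x).ncard ≤ S.ncard := by
  refine Set.ncard_le_ncard_of_injOn (fun y => c s(x, y)) hS ?_
  intro y hy z hz hyz
  by_contra hne
  exact isProper3EdgeColoring_iff.1 hc (kempeGraph_adj.1 hy).1 (kempeGraph_adj.1 hz).1 hne hyz

theorem ncard_neighborSet_kempeGraph_le_two (hc : IsProper3EdgeColoring J c) (x : W) :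
    ((J.kempeGraph c α β).neighborSet x).ncard ≤ 2 :=
  (ncard_neighborSet_kempeGraph_le (S := {α, β}) hc fun _ hy => (kempeGraph_adj.1 hy).2).trans
    ((Set.ncard_insert_le α {β}).trans (by rw [Set.ncard_singleton]))

theorem ncard_neighborSet_kempeGraph_le_one (hc : IsProper3EdgeColoring J c) {x : W}
    (hx : J.MissesColor c x α) : ((J.kempeGraph c α β).neighborSet x).ncard ≤ 1 :=
  (ncard_neighborSet_kempeGraph_le (S := {β}) hc fun _ hy =>
    (kempeGraph_adj.1 hy).2.resolve_left (hx (kempeGraph_adj.1 hy).1)).trans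
    (Set.ncard_singleton β).le

/-- Swapping `α` and `β` on the Kempe chain through `x`. -/
theorem exists_kempe_swap (hc : IsProper3EdgeColoring J c) (hαβ : α ≠ β) {x w : W}
    (hx : J.MissesColor c x α) (hw : J.MissesColor c w α)
    (hxw : ¬ (J.kempeGraph c α β).Reachable x w) :
    ∃ c', IsProper3EdgeColoring J c' ∧ J.MissesColor c' x β ∧ J.MissesColor c' w α := by
  classical
  set K := J.kempeGraph c α β
  let c' : Sym2 W → Fin 3 := fun e =>
    if e ∈ K.edgeSet ∧ ∀ t ∈ e, K.Reachable x t then Equiv.swap α β (c e) else c e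
  have hc' : ∀ y z, c' s(y, z) =
      if K.Adj y z ∧ K.Reachable x y then Equiv.swap α β (c s(y, z)) else c s(y, z) := by
    intro y z
    have : (K.Adj y z ∧ ∀ t ∈ s(y, z), K.Reachable x t) ↔ K.Adj y z ∧ K.Reachable x y := by
      simp only [Sym2.mem_iff, forall_eq_or_imp, forall_eq]
      exact ⟨fun h => ⟨h.1, h.2.1⟩, fun h => ⟨h.1, h.2, h.2.trans h.1.reachable⟩⟩
    simp only [c', mem_edgeSet, this]
  have hswap : ∀ {y z}, K.Adj y z → Equiv.swap α β (c s(y, z)) = α ∨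
      Equiv.swap α β (c s(y, z)) = β := by
    intro y z hyz
    rcases (kempeGraph_adj.1 hyz).2 with h | h <;> simp [h]
  refine ⟨c', isProper3EdgeColoring_iff.2 fun y z₁ z₂ h₁ h₂ hne => ?_, fun y hy => ?_,
    fun y hy => ?_⟩
  · have mixed : ∀ {z₁ z₂}, J.Adj y z₂ → K.Adj y z₁ ∧ K.Reachable x y →
        ¬ (K.Adj y z₂ ∧ K.Reachable x y) → c' s(y, z₁) ≠ c' s(y, z₂) := by
      intro z₁ z₂ h₂ hs₁ hs₂
      rw [hc', hc', if_pos hs₁, if_neg hs₂]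
      have : ¬ (c s(y, z₂) = α ∨ c s(y, z₂) = β) := fun h => hs₂ ⟨kempeGraph_adj.2 ⟨h₂, h⟩, hs₁.2⟩
      rcases hswap hs₁.1 with h | h <;> rw [h] <;> tauto
    by_cases hs₁ : K.Adj y z₁ ∧ K.Reachable x y <;> by_cases hs₂ : K.Adj y z₂ ∧ K.Reachable x y
    · rw [hc', hc', if_pos hs₁, if_pos hs₂, (Equiv.swap α β).injective.ne_iff]
      exact isProper3EdgeColoring_iff.1 hc h₁ h₂ hne
    · exact mixed h₂ hs₁ hs₂
    · exact (mixed h₁ hs₂ hs₁).symm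
    · rw [hc', hc', if_neg hs₁, if_neg hs₂]
      exact isProper3EdgeColoring_iff.1 hc h₁ h₂ hne
  · rw [hc']
    split_ifs with hs
    · rcases (kempeGraph_adj.1 hs.1).2 with h | h
      · exact absurd h (hx hy)
      · simpa [h] using hαβ
    · exact fun h => hs ⟨kempeGraph_adj.2 ⟨hy, Or.inr h⟩, Reachable.refl x⟩
  · rw [hc', if_neg fun hs => hxw hs.2]
    exact hw hy

/-- The Kempe chains are paths and cycles, so the chain through `x` misses `y` or `z`; swap it. -/
theorem exists_kempe_recoloring [Finite W] (hc : IsProper3EdgeColoring J c) (hαβ : α ≠ β)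
    {x y z : W} (hxy : x ≠ y) (hxz : x ≠ z) (hyz : y ≠ z) (hx : J.MissesColor c x α)
    (hy : J.MissesColor c y α) (hz : J.MissesColor c z α) :
    ∃ c', IsProper3EdgeColoring J c' ∧ J.MissesColor c' x β ∧
      (J.MissesColor c' y α ∨ J.MissesColor c' z α) := by
  have hdeg : ∀ {t}, J.MissesColor c t α → ((J.kempeGraph c α β).neighborSet t).ncard ≤ 1 :=
    ncard_neighborSet_kempeGraph_le_one hc
  by_cases hrxy : (J.kempeGraph c α β).Reachable x y
  · have hrxz := not_reachable_of_ncard_neighborSet_le_one (ncard_neighborSet_kempeGraph_le_two hc)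
      hxy hxz hyz (hdeg hx) (hdeg hy) (hdeg hz) hrxy
    obtain ⟨c', hc', hx', hz'⟩ := exists_kempe_swap hc hαβ hx hz hrxz
    exact ⟨c', hc', hx', Or.inr hz'⟩
  · obtain ⟨c', hc', hx', hy'⟩ := exists_kempe_swap hc hαβ hx hy hrxy
    exact ⟨c', hc', hx', Or.inl hy'⟩

theorem is3EdgeColorable_deleteEdges_image {v : W} {P : Set W}
    (hc : IsProper3EdgeColoring (J.deleteEdges {e | v ∈ e}) c) {f : W → Fin 3}
    (hf : Set.InjOn f P) (hmiss : ∀ p ∈ P, (J.deleteEdges {e | v ∈ e}).MissesColor c p (f p)) :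
    Is3EdgeColorable (J.deleteEdges ((fun y => s(v, y)) '' (J.neighborSet v \ P))) := by
  classical
  set J' := J.deleteEdges ((fun y => s(v, y)) '' (J.neighborSet v \ P))
  let c' : Sym2 W → Fin 3 := fun e => if h : v ∈ e then f (Sym2.Mem.other h) else c e
  have hc'v : ∀ y, c' s(v, y) = f y := fun y => by
    simp only [c', dif_pos (Sym2.mem_mk_left v y)]
    exact congrArg f (Sym2.congr_right.1 (Sym2.other_spec (Sym2.mem_mk_left v y)))
  have hc'ne : ∀ {y z}, y ≠ v → z ≠ v → c' s(y, z) = c s(y, z) := by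
    intro y z hy hz
    have : v ∉ s(y, z) := by simp [Ne.symm hy, Ne.symm hz]
    simp only [c', dif_neg this]
  have hkept : ∀ {y}, J'.Adj v y → y ∈ P := by
    intro y hy
    by_contra hyP
    exact (deleteEdges_adj.1 hy).2 ⟨y, ⟨(deleteEdges_adj.1 hy).1, hyP⟩, rfl⟩
  have hadj : ∀ {y z}, J'.Adj y z → y ≠ v → z ≠ v → (J.deleteEdges {e | v ∈ e}).Adj y z :=
    fun h hy hz => deleteEdges_adj.2 ⟨(deleteEdges_adj.1 h).1, by simp [Ne.symm hy, Ne.symm hz]⟩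
  have mixed : ∀ {x z}, x ≠ v → z ≠ v → J'.Adj x v → J'.Adj x z → c' s(x, v) ≠ c' s(x, z) := by
    intro x z hx hz hxv hxz
    rw [Sym2.eq_swap, hc'v, hc'ne hx hz]
    exact (hmiss x (hkept hxv.symm) (hadj hxz hx hz)).symm
  refine ⟨c', isProper3EdgeColoring_iff.2 fun x y z hy hz hyz => ?_⟩
  by_cases hx : x = v
  · subst hx
    rw [hc'v, hc'v]
    exact hf.ne (hkept hy) (hkept hz) hyz
  by_cases hyv : y = v
  · subst hyv
    exact mixed hx (Ne.symm hyz) hy hz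
  by_cases hzv : z = v
  · subst hzv
    exact (mixed hx hyv hz hy).symm
  rw [hc'ne hx hyv, hc'ne hx hzv]
  exact isProper3EdgeColoring_iff.1 hc (hadj hy hx hyv) (hadj hz hx hzv) hyz

/-- Each neighbour of `v` misses a colour. Keeping two edges `v p`, `v q` with `p` and `q` missing
different colours costs at most one deleted edge at `v`; when all three neighbours miss the same
colour, a Kempe swap makes two of them miss different colours. -/
theorem exists_ncard_le_one_is3EdgeColorable_deleteEdges [Finite W]
    (hJ : ∀ x, (J.neighborSet x).ncard ≤ 3) (v : W)
    (hcol : Is3EdgeColorable (J.deleteEdges {e | v ∈ e})) :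
    ∃ F ⊆ J.edgeSet, F.ncard ≤ 1 ∧ Is3EdgeColorable (J.deleteEdges F) := by
  classical
  set J₀ := J.deleteEdges {e | v ∈ e}
  set N := J.neighborSet v
  have hN3 : N.ncard ≤ 3 := hJ v
  have keep : ∀ c, IsProper3EdgeColoring J₀ c → ∀ (P : Set W) (f : W → Fin 3), Set.InjOn f P →
      (∀ p ∈ P, J₀.MissesColor c p (f p)) → (N \ P).ncard ≤ 1 →
      ∃ F ⊆ J.edgeSet, F.ncard ≤ 1 ∧ Is3EdgeColorable (J.deleteEdges F) := by
    intro c hc P f hf hmiss hP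
    refine ⟨_, ?_, (Set.ncard_image_le (N \ P).toFinite).trans hP,
      is3EdgeColorable_deleteEdges_image hc hf hmiss⟩
    rintro _ ⟨y, hy, rfl⟩
    exact hy.1
  have keep_two : ∀ c, IsProper3EdgeColoring J₀ c → ∀ p ∈ N, ∀ q ∈ N, p ≠ q → ∀ α β, α ≠ β →
      J₀.MissesColor c p α → J₀.MissesColor c q β →
      ∃ F ⊆ J.edgeSet, F.ncard ≤ 1 ∧ Is3EdgeColorable (J.deleteEdges F) := by
    intro c hc p hp q hq hpq α β hαβ hpα hqβ
    refine keep c hc {p, q} (fun r => if r = p then α else β) ?_ ?_ ?_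
    · rintro r (rfl | rfl) r' (rfl | rfl) h <;> simp_all [Ne.symm hpq]
    · rintro r (rfl | rfl)
      · simpa using hpα
      · simpa [Ne.symm hpq] using hqβ
    · rw [Set.ncard_sdiff (by simp [Set.insert_subset_iff, hp, hq]), Set.ncard_pair hpq]
      omega
  obtain ⟨c, hc⟩ := hcol
  have hmiss : ∀ x ∈ N, ∃ α, J₀.MissesColor c x α := by
    intro x hx
    refine exists_missesColor c ?_
    have hsub : J₀.neighborSet x ⊆ J.neighborSet x \ {v} := fun y hy =>
      ⟨(deleteEdges_adj.1 hy).1, by rintro rfl; exact (deleteEdges_adj.1 hy).2 (by simp)⟩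
    have := (Set.ncard_le_ncard hsub).trans_eq (Set.ncard_sdiff_singleton_of_mem hx.symm)
    have := hJ x
    omega
  rcases (by omega : N.ncard ≤ 1 ∨ N.ncard = 2 ∨ N.ncard = 3) with hN | hN | hN
  · exact keep c hc ∅ (fun _ => 0) (Set.injOn_empty _) (by simp) (by simpa using hN)
  · obtain ⟨x, y, hxy, hNxy⟩ := Set.ncard_eq_two.1 hN
    have hx : x ∈ N := by simp [hNxy]
    obtain ⟨α, hα⟩ := hmiss x hx
    refine keep c hc {x} (fun _ => α) (Set.injOn_singleton _ _) (by simpa using hα) ?_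
    rw [Set.ncard_sdiff_singleton_of_mem hx, hN]
  obtain ⟨x, y, z, hxy, hxz, hyz, hNxyz⟩ := Set.ncard_eq_three.1 hN
  have hx : x ∈ N := by simp [hNxyz]
  have hy : y ∈ N := by simp [hNxyz]
  have hz : z ∈ N := by simp [hNxyz]
  obtain ⟨α, hxα⟩ := hmiss x hx
  by_cases hyα : J₀.MissesColor c y α
  · by_cases hzα : J₀.MissesColor c z α
    · obtain ⟨β, hβα⟩ := exists_ne α
      obtain ⟨c', hc', hxβ, hyα' | hzα'⟩ :=
        exists_kempe_recoloring hc hβα.symm hxy hxz hyz hxα hyα hzα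
      · exact keep_two c' hc' x hx y hy hxy β α hβα hxβ hyα'
      · exact keep_two c' hc' x hx z hz hxz β α hβα hxβ hzα'
    · obtain ⟨β, hzβ⟩ := hmiss z hz
      exact keep_two c hc x hx z hz hxz α β (by rintro rfl; exact hzα hzβ) hxα hzβ
  · obtain ⟨β, hyβ⟩ := hmiss y hy
    exact keep_two c hc x hx y hy hxy α β (by rintro rfl; exact hyα hyβ) hxα hyβ

theorem exists_ncard_le_is3EdgeColorable_deleteEdges [Finite W]
    (hJ : ∀ x, (J.neighborSet x).ncard ≤ 3) (T : Set W)
    (hcol : Is3EdgeColorable (J.deleteEdges {e | ∃ t ∈ T, t ∈ e})) :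
    ∃ F ⊆ J.edgeSet, F.ncard ≤ T.ncard ∧ Is3EdgeColorable (J.deleteEdges F) := by
  induction T, T.toFinite using Set.Finite.induction_on generalizing J with
  | empty => exact ⟨∅, Set.empty_subset _, by simp, by simpa using hcol⟩
  | @insert v T hvT _ ih =>
    have hdeg : ∀ (s : Set (Sym2 W)) x, ((J.deleteEdges s).neighborSet x).ncard ≤ 3 :=
      fun s x => (Set.ncard_le_ncard (neighborSet_mono (J.deleteEdges_le s) x)).trans (hJ x)
    obtain ⟨F', hF', hF'T, hF'col⟩ := ih (J := J.deleteEdges {e | v ∈ e}) (hdeg _) (by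
      rw [deleteEdges_deleteEdges]
      convert hcol using 3
      ext e
      simp [or_and_right, exists_or])
    obtain ⟨F'', hF'', hF''1, hF''col⟩ :=
      exists_ncard_le_one_is3EdgeColorable_deleteEdges (hdeg F') v (by
        rw [deleteEdges_deleteEdges, Set.union_comm, ← deleteEdges_deleteEdges]
        exact hF'col)
    refine ⟨F' ∪ F'', Set.union_subset (hF'.trans (edgeSet_mono (J.deleteEdges_le _)))
      (hF''.trans (edgeSet_mono (J.deleteEdges_le _))), ?_, by rwa [← deleteEdges_deleteEdges]⟩
    rw [Set.ncard_insert_of_notMem hvT]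
    exact (Set.ncard_union_le _ _).trans (by omega)

variable {V : Type*} {G : SimpleGraph V}

theorem Subgraph.ncard_neighborSet_coe_le [Finite V] (H : G.Subgraph) (x : H.verts) :
    (H.coe.neighborSet x).ncard ≤ (G.neighborSet x).ncard := by
  rw [← Nat.card_coe_set_eq, Nat.card_congr (H.coeNeighborSetEquiv x), Nat.card_coe_set_eq]
  exact Set.ncard_le_ncard (H.neighborSet_subset x)

namespace Walk

/-- Two edges of a path sharing a vertex are consecutive in `p.edges`. -/
theorem IsPath.idxOf_edges_mod_two_ne [DecidableEq V] {a b : V} {p : G.Walk a b} (hp : p.IsPath)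
    {e₁ e₂ : Sym2 V} (h₁ : e₁ ∈ p.edges) (h₂ : e₂ ∈ p.edges) (hne : e₁ ≠ e₂) {t : V}
    (ht₁ : t ∈ e₁) (ht₂ : t ∈ e₂) : p.edges.idxOf e₁ % 2 ≠ p.edges.idxOf e₂ % 2 := by
  have hpos : ∀ {e}, e ∈ p.edges → p.edges.idxOf e < p.length ∧
      e = s(p.getVert (p.edges.idxOf e), p.getVert (p.edges.idxOf e + 1)) := by
    intro e he
    have hlt := List.idxOf_lt_length_iff.2 he
    exact ⟨p.length_edges ▸ hlt, (List.getElem_idxOf hlt).symm.trans (getElem_edges hlt)⟩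
  obtain ⟨hi, he₁⟩ := hpos h₁
  obtain ⟨hj, he₂⟩ := hpos h₂
  set i := p.edges.idxOf e₁
  set j := p.edges.idxOf e₂
  have hinj : ∀ {m n}, m ≤ p.length → n ≤ p.length → p.getVert m = p.getVert n → m = n :=
    fun hm hn h => hp.getVert_injOn hm hn h
  have hij : i ≠ j := fun h => hne (by rw [he₁, he₂, h])
  rw [he₁, Sym2.mem_iff] at ht₁
  rw [he₂, Sym2.mem_iff] at ht₂
  rcases ht₁ with rfl | rfl <;> rcases ht₂ with h | h
  all_goals first
    | have := hinj (by omega) (by omega) h; omega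

theorem IsCycle.eq_of_not_toSubgraph_adj [Finite V] {a : V} {c : G.Walk a a} (hc : c.IsCycle)
    {t y₁ y₂ : V} (ht : t ∈ c.support) (hdeg : (G.neighborSet t).ncard ≤ 3) (h₁ : G.Adj t y₁)
    (h₂ : G.Adj t y₂) (n₁ : ¬ c.toSubgraph.Adj t y₁) (n₂ : ¬ c.toSubgraph.Adj t y₂) :
    y₁ = y₂ := by
  by_contra hne
  have hsub : insert y₁ (insert y₂ (c.toSubgraph.neighborSet t)) ⊆ G.neighborSet t :=
    Set.insert_subset h₁ (Set.insert_subset h₂ (c.toSubgraph.neighborSet_subset t))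
  have := Set.ncard_le_ncard hsub
  rw [Set.ncard_insert_of_notMem (by simpa [hne] using n₁),
    Set.ncard_insert_of_notMem (by simpa using n₂), hc.ncard_neighborSet_toSubgraph_eq_two ht]
    at this
  omega

/-- The path `c.tail` is coloured alternately `0` and `1`; the remaining edges get colour `2`,
which is proper since each vertex of `c` has only one edge off `c`. -/
theorem IsCycle.is3EdgeColorable [Finite V] {a : V} {c : G.Walk a a} (hc : c.IsCycle)
    (hG : ∀ t, (G.neighborSet t).ncard ≤ 3) {K : SimpleGraph V} (hK : K ≤ G)
    (hsupp : ∀ ⦃x y⦄, K.Adj x y → x ∈ c.support) (hfirst : ¬ K.Adj a c.snd) :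
    Is3EdgeColorable K := by
  classical
  set p := c.tail
  have hedges : c.edges = s(a, c.snd) :: p.edges := by
    conv_lhs => rw [← c.cons_tail_eq hc.not_nil]
    rfl
  have hoff : ∀ {x y}, K.Adj x y → s(x, y) ∉ p.edges → ¬ c.toSubgraph.Adj x y := by
    intro x y hxy hp hc
    rw [adj_toSubgraph_iff_mem_edges, hedges, List.mem_cons] at hc
    rcases hc with h | h
    · rcases Sym2.eq_iff.1 h with ⟨rfl, rfl⟩ | ⟨rfl, rfl⟩
      exacts [hfirst hxy, hfirst hxy.symm]
    · exact hp h
  refine ⟨fun e => if e ∈ p.edges then (if p.edges.idxOf e % 2 = 0 then 0 else 1) else 2,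
    isProper3EdgeColoring_iff.2 fun x y z hy hz hyz => ?_⟩
  by_cases m₁ : s(x, y) ∈ p.edges <;> by_cases m₂ : s(x, z) ∈ p.edges <;>
    simp only [m₁, m₂, if_true, if_false]
  · have hp : p.IsPath := hc.isPath_tail
    have := hp.idxOf_edges_mod_two_ne m₁ m₂ (fun h => hyz (Sym2.congr_right.1 h))
      (Sym2.mem_mk_left x y) (Sym2.mem_mk_left x z)
    split_ifs <;> first | decide | (exfalso; omega)
  · split_ifs <;> decide
  · split_ifs <;> decide
  · exact fun _ => hyz (hc.eq_of_not_toSubgraph_adj (hsupp hy) (hG x) (hK hy) (hK hz)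
      (hoff hy m₁) (hoff hz m₂))

theorem IsCycle.exists_isCycle_snd_eq [DecidableEq V] {u : V} {w : G.Walk u u} (hw : w.IsCycle)
    {a b : V} (hab : s(a, b) ∈ w.edges) :
    ∃ c : G.Walk a a, c.IsCycle ∧ c.snd = b ∧ c.toSubgraph.verts = w.toSubgraph.verts := by
  have ha := w.fst_mem_support_of_mem_edges hab
  have hadj : (w.rotate a ha).toSubgraph.Adj a b := by
    rw [toSubgraph_rotate, adj_toSubgraph_iff_mem_edges]
    exact hab
  simpa only [toSubgraph_rotate] using (hw.rotate ha).exists_isCycle_snd_verts_eq hadj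

theorem IsCycle.is3EdgeColorable_coe_deleteEdges [Finite V] {a : V} {c : G.Walk a a}
    (hc : c.IsCycle) (hG : ∀ t, (G.neighborSet t).ncard ≤ 3) (H : G.Subgraph)
    (hfirst : s(a, c.snd) ∉ H.edgeSet) :
    Is3EdgeColorable
      (H.coe.deleteEdges {e | ∃ t ∈ {x : H.verts | (x : V) ∉ c.support}, t ∈ e}) := by
  refine .of_map (Function.Embedding.subtype _) (hc.is3EdgeColorable hG ?_ ?_ ?_)
  · intro x' y' h
    obtain ⟨x, y, hxy, rfl, rfl⟩ := (map_adj _ _ _ _).1 h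
    exact H.adj_sub (deleteEdges_adj.1 hxy).1
  · intro x' y' h
    obtain ⟨x, y, hxy, rfl, -⟩ := (map_adj _ _ _ _).1 h
    by_contra hx
    exact (deleteEdges_adj.1 hxy).2 ⟨x, hx, Sym2.mem_mk_left _ _⟩
  · intro h
    obtain ⟨x, y, hxy, hx, hy⟩ := (map_adj _ _ _ _).1 h
    have := (deleteEdges_adj.1 hxy).1
    rw [Subgraph.coe_adj] at this
    exact hfirst (by simpa [← hx, ← hy] using this)

end Walk

end SimpleGraph

theorem stmt_0_general {V : Type*} [Fintype V] (G : SimpleGraph V)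
    (hcubic : ∀ v, (G.neighborSet v).ncard = 3)
    (H : G.Subgraph) (k : ℕ) (hres : resistance H.coe = k)
    (u : V) (w : G.Walk u u) (hcyc : w.IsCycle)
    (hnotin : ¬ (∀ e ∈ w.edges, e ∈ H.edgeSet)) :
    k ≤ (H.verts \ {v | v ∈ w.support}).ncard := by
  classical
  subst hres
  push Not at hnotin
  obtain ⟨e, he, heH⟩ := hnotin
  induction e using Sym2.ind with | _ a b => ?_
  obtain ⟨c, hc, rfl, hcw⟩ := hcyc.exists_isCycle_snd_eq he
  have hsupp : ∀ x, x ∈ c.support ↔ x ∈ w.support := fun x => by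
    rw [← Walk.mem_verts_toSubgraph, hcw, Walk.mem_verts_toSubgraph]
  set T : Set H.verts := {x | (x : V) ∉ c.support}
  obtain ⟨F, hF, hFT, hFcol⟩ := exists_ncard_le_is3EdgeColorable_deleteEdges
    (fun x => (H.ncard_neighborSet_coe_le x).trans (hcubic x).le) T
    (hc.is3EdgeColorable_coe_deleteEdges (fun t => (hcubic t).le) H heH)
  have hT : Subtype.val '' T = H.verts \ {v | v ∈ w.support} := by
    ext x
    simp [T, hsupp, and_comm]
  calc resistance H.coe ≤ F.ncard := resistance_le_ncard hF hFcol
    _ ≤ T.ncard := hFT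
    _ = _ := by rw [← hT, Set.ncard_image_of_injective _ Subtype.val_injective]

/-- If `H` is a subgraph of a bridgeless cubic graph `G` with resistance `k`, then any
cycle of `G` not contained in `H` misses at least `k` vertices of `H`. -/
theorem stmt_0 {V : Type*} [Fintype V] (G : SimpleGraph V)
    (hcubic : ∀ v, (G.neighborSet v).ncard = 3)
    (hbridgeless : ∀ e ∈ G.edgeSet, ¬ G.IsBridge e)
    (H : G.Subgraph) (k : ℕ) (hres : resistance H.coe = k)
    (u : V) (w : G.Walk u u) (hcyc : w.IsCycle)
    (hnotin : ¬ (∀ e ∈ w.edges, e ∈ H.edgeSet)) :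
    k ≤ (H.verts \ {v | v ∈ w.support}).ncard :=
  stmt_0_general G hcubic H k hres u w hcyc hnotin
end

section
/- Let B be the graph obtained from the Petersen graph by deleting two adjacent vertices u and v (keeping no dangling edges, so B has 8 vertices). Then no Hamiltonian path of B can be extended, together with u, v, and suitable edges of the Petersen graph, to a Hamiltonian cycle of the Petersen graph; consequently, any path in B whose endpoints are (in the Petersen graph) neighbours of u and of v respectively cannot cover all 8 vertices of B. -/
/-!
If a path of `B` from a neighbour `a` of `u` to a neighbour `b` of `v` visited all eight vertices
of `B`, then `u → a ⇝ b → v → u` would be a Hamiltonian cycle of the Petersen graph. The Petersen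
graph has none, which is settled by an exhaustive search for Hamiltonian paths.
-/

open SimpleGraph

/-- The Petersen graph as the Kneser graph K(5,2): vertices are the 2-element
subsets of a 5-element set, adjacent iff disjoint. -/
def petersen : SimpleGraph {s : Finset (Fin 5) // s.card = 2} where
  Adj a b := Disjoint a.1 b.1
  symm := ⟨fun a b h => h.symm⟩
  loopless := ⟨by
    intro a h
    rw [disjoint_self] at h
    simpa [h] using a.2⟩

namespace SimpleGraph

variable {V : Type*} [DecidableEq V]

/-- `pathSearch G b n r c` decides, by depth-first search, whether there is a path of length `n`
from `c` to `b` whose vertices other than `c` are exactly those of `r`. -/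
def pathSearch (G : SimpleGraph V) [DecidableRel G.Adj] (b : V) : ℕ → Finset V → V → Bool
  | 0, r, c => decide (r = ∅ ∧ c = b)
  | n + 1, r, c => decide (∃ d ∈ r, G.Adj c d ∧ pathSearch G b n (r.erase d) d = true)

variable {G : SimpleGraph V}

theorem Walk.IsPath.erase_toFinset_support {c b : V} {p : G.Walk c b} (hp : p.IsPath) :
    p.support.toFinset.erase c = p.support.tail.toFinset := by
  obtain ⟨hc, -⟩ := List.nodup_cons.1 (p.cons_tail_support ▸ hp.support_nodup)
  conv_lhs => rw [← p.cons_tail_support]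
  rw [List.toFinset_cons, Finset.erase_insert (by simpa using hc)]

theorem Walk.IsPath.pathSearch_eq_true [DecidableRel G.Adj] {c b : V} {p : G.Walk c b}
    (hp : p.IsPath) : G.pathSearch b p.length p.support.tail.toFinset c = true := by
  induction p with
  | nil => simp [pathSearch]
  | @cons c d b h q ih =>
    simp only [Walk.length_cons, Walk.support_cons, List.tail_cons, pathSearch,
      decide_eq_true_eq]
    exact ⟨d, by simp, h, hp.of_cons.erase_toFinset_support ▸ ih hp.of_cons⟩

theorem Walk.IsHamiltonian.pathSearch_eq_true [Fintype V] [DecidableRel G.Adj] {c b : V}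
    {p : G.Walk c b} (hp : p.IsHamiltonian) :
    G.pathSearch b (Fintype.card V - 1) (Finset.univ.erase c) c = true := by
  rw [← hp.length_eq, ← hp.toFinset_support, hp.isPath.erase_toFinset_support]
  exact hp.isPath.pathSearch_eq_true

theorem isHamiltonian_of_isPath_of_mem_support_iff [Fintype V] {u v a b : V}
    (huv : G.Adj u v) (ha : G.Adj u a) (hb : G.Adj v b) {q : G.Walk a b} (hq : q.IsPath)
    (hq_support : ∀ w, w ∈ q.support ↔ w ≠ u ∧ w ≠ v) : G.IsHamiltonian := by
  intro _
  have hq_length : q.length + 3 = Fintype.card V := by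
    have htoFinset : q.support.toFinset = (Finset.univ.erase u).erase v := by
      ext w; simp [hq_support, and_comm]
    have := congrArg Finset.card htoFinset
    rw [List.toFinset_card_of_nodup hq.support_nodup, Walk.length_support,
      Finset.card_erase_of_mem (by simp [huv.ne.symm]), Finset.card_erase_of_mem (by simp),
      Finset.card_univ] at this
    omega
  have hu : u ∉ q.support := by simp [hq_support]
  refine ⟨u, .cons ha ((q.concat hb.symm).concat huv.symm), ?_⟩
  rw [Walk.isHamiltonianCycle_iff_isCycle_and_length_eq, Walk.cons_isCycle_iff]
  refine ⟨⟨(hq.concat (by simp [hq_support]) _).concat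
    (by simp [Walk.support_concat, hu, huv.ne]) _, ?_⟩, by simp [Walk.length_concat, ← hq_length]⟩
  have hav : a ≠ v := ((hq_support a).1 q.start_mem_support).2
  have hub : u ≠ b := fun h ↦ hu (h ▸ q.end_mem_support)
  have hua : s(u, a) ∉ q.edges := fun h ↦ hu (q.fst_mem_support_of_mem_edges h)
  simp [Walk.edges_concat, hua, hav, hub, huv.ne]

theorem not_isHamiltonian_of_pathSearch [Fintype V] [DecidableRel G.Adj] (x : V) [Nontrivial V]
    (h : ∀ y, G.Adj x y → G.pathSearch x (Fintype.card V - 1) (Finset.univ.erase y) y = false) :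
    ¬ G.IsHamiltonian := by
  intro hG
  obtain ⟨c, hc⟩ := hG.exists_isHamiltonianCycle x
  cases c with
  | nil => exact hc.not_nil Walk.Nil.nil
  | cons hxy q =>
    rw [Walk.isHamiltonianCycle_iff_isCycle_and_length_eq, Walk.cons_isCycle_iff,
      Walk.length_cons] at hc
    have hq : q.IsHamiltonian :=
      Walk.isHamiltonian_iff_isPath_and_length_eq.2 ⟨hc.1.1, by omega⟩
    simpa [h _ hxy] using hq.pathSearch_eq_true

end SimpleGraph

instance : DecidableRel petersen.Adj := fun a b ↦ inferInstanceAs (Decidable (Disjoint a.1 b.1))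

-- A Hamiltonian cycle through `{0, 1}` would give a Hamiltonian path from one of its three
-- neighbours back to it; the kernel runs the search and finds none.
set_option maxRecDepth 10000 in
theorem petersen_not_isHamiltonian : ¬ petersen.IsHamiltonian :=
  have : Nontrivial {s : Finset (Fin 5) // s.card = 2} :=
    ⟨⟨⟨{0, 1}, rfl⟩, ⟨{0, 2}, rfl⟩, by decide⟩⟩
  not_isHamiltonian_of_pathSearch ⟨{0, 1}, rfl⟩ (by decide)

/-- Let B be the Petersen graph minus two adjacent vertices u, v.  Any path in B whose
endpoints are neighbours (in the Petersen graph) of u and of v respectively misses some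
vertex of B. -/
theorem stmt_5 (u v : {s : Finset (Fin 5) // s.card = 2}) (huv : petersen.Adj u v)
    (B : SimpleGraph {w : {s : Finset (Fin 5) // s.card = 2} // w ≠ u ∧ w ≠ v})
    (hB : B = petersen.induce {w | w ≠ u ∧ w ≠ v})
    (a b : {w : {s : Finset (Fin 5) // s.card = 2} // w ≠ u ∧ w ≠ v})
    (ha : petersen.Adj u a.1) (hb : petersen.Adj v b.1)
    (p : B.Walk a b) (hp : p.IsPath) :
    ∃ w, w ∉ p.support := by
  subst hB
  by_contra! hcover
  let f := Embedding.induce (G := petersen) {w | w ≠ u ∧ w ≠ v}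
  have hq : (p.map f.toHom).IsPath := hp.map f.injective
  refine petersen_not_isHamiltonian <|
    isHamiltonian_of_isPath_of_mem_support_iff (a := f a) (b := f b) huv ha hb hq fun w ↦ ?_
  rw [Walk.support_map, List.mem_map]
  exact ⟨fun ⟨x, _, hx⟩ ↦ hx ▸ x.2, fun hw ↦ ⟨⟨w, hw⟩, hcover _, rfl⟩⟩
end

section
/- Let H be the graph formed from two copies of a non-3-edge-colourable 4-pole H1 (with dangling edges e1, e2, f1, f2 where e1 and f1 must receive the same colour in any 3-edge-colouring of H1) by identifying the f1-edges of the two copies and attaching both e1-edges to a new vertex v. Then H is not properly 3-edge-colourable; i.e., H has resistance at least 1. -/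
open SimpleGraph

/-- The graph H formed from two copies of a 4-pole `G₁` (copies indexed by `Bool`) by
joining the attachment vertices of the dangling edge f₁ of the two copies by an edge
(identifying the f₁-edges) and attaching the e₁-edges of both copies to a new vertex. -/
def twoCopies {V₁ : Type*} (G₁ : SimpleGraph V₁) (ae₁ af₁ : V₁) :
    SimpleGraph (V₁ × Bool ⊕ Unit) where
  Adj p q := match p, q with
    | .inl (x, i), .inl (y, j) => (i = j ∧ G₁.Adj x y) ∨ (i ≠ j ∧ x = af₁ ∧ y = af₁)
    | .inl (x, _), .inr _ => x = ae₁
    | .inr _, .inl (y, _) => y = ae₁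
    | .inr _, .inr _ => False
  symm := by
    constructor
    rintro (⟨x, i⟩ | u) (⟨y, j⟩ | u') h
    · rcases h with ⟨hij, h⟩ | ⟨hij, h₁, h₂⟩
      · exact Or.inl ⟨hij.symm, h.symm⟩
      · exact Or.inr ⟨hij.symm, h₂, h₁⟩
    · exact h
    · exact h
    · exact h
  loopless := by
    constructor
    rintro (⟨x, i⟩ | u) h
    · rcases h with ⟨_, h⟩ | ⟨hij, _, _⟩
      · exact G₁.loopless.irrefl x h
      · exact hij rfl
    · exact h

/-!
Restrict a proper 3-edge-colouring of `H` to one copy of the pole and give its dangling edges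
e₁ and f₁ the colours of the edge to the new vertex and of the identified f₁-edge. Every vertex
of the pole has degree three counting dangling edges, so e₂ and f₂ can then be coloured greedily,
and the hypothesis on the pole makes the edge to the new vertex the colour of the f₁-edge. This
holds in both copies, so the two edges at the new vertex get the same colour.
-/

namespace IsProper3EdgeColoring

variable {V W : Type*} {G : SimpleGraph V} {c : Sym2 V → Fin 3}

theorem injOn_neighborSet (hc : IsProper3EdgeColoring G c) (w : V) :
    Set.InjOn (fun u => c s(w, u)) (G.neighborSet w) := by
  intro u hu u' hu' h
  by_contra hne
  exact hc _ hu _ hu' (fun h' => hne (Sym2.congr_right.mp h'))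
    ⟨w, Sym2.mem_mk_left _ _, Sym2.mem_mk_left _ _⟩ h

theorem comap {H : SimpleGraph W} {c : Sym2 W → Fin 3} (hc : IsProper3EdgeColoring H c)
    (f : G ↪g H) : IsProper3EdgeColoring G (c ∘ Sym2.map f) := by
  rintro e₁ he₁ e₂ he₂ hne ⟨v, hv₁, hv₂⟩
  refine hc _ (f.toHom.map_mem_edgeSet he₁) _ (f.toHom.map_mem_edgeSet he₂) ?_
    ⟨f v, Sym2.mem_map.mpr ⟨v, hv₁, rfl⟩, Sym2.mem_map.mpr ⟨v, hv₂, rfl⟩⟩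
  exact fun h => hne (Sym2.map.injective f.injective h)

end IsProper3EdgeColoring

/-- Dangling edge `i` is attached at `a i` and coloured `d i`; those with `i ∈ S` extend `c`
properly. -/
def DanglingCompatible {V ι : Type*} (G : SimpleGraph V) (a : ι → V) (c : Sym2 V → Fin 3)
    (S : Finset ι) (d : ι → Fin 3) : Prop :=
  (∀ e ∈ G.edgeSet, ∀ i ∈ S, a i ∈ e → c e ≠ d i) ∧
    ∀ i ∈ S, ∀ j ∈ S, i ≠ j → a i = a j → d i ≠ d j

namespace DanglingCompatible

variable {V ι : Type*} [DecidableEq V] [Fintype ι] [DecidableEq ι] {G : SimpleGraph V}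
  {a : ι → V} {c : Sym2 V → Fin 3} {S : Finset ι} {d : ι → Fin 3}

-- Besides dangling edge `k`, vertex `a k` carries at most two edges, leaving a colour free.
theorem exists_color_ne_of_notMem
    (hdeg : ∀ w, (G.neighborSet w).ncard + (Finset.univ.filter fun i => a i = w).card ≤ 3)
    (hc : IsProper3EdgeColoring G c) {k : ι} (hk : k ∉ S) :
    ∃ x, (∀ u ∈ G.neighborSet (a k), c s(a k, u) ≠ x) ∧ ∀ j ∈ S, a j = a k → d j ≠ x := by
  set w := a k
  set F : Set (Fin 3) :=
    (fun u => c s(w, u)) '' G.neighborSet w ∪ d '' ↑(S.filter fun j => a j = w)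
  have hS : S.filter (fun j => a j = w) ⊆ (Finset.univ.filter fun j => a j = w).erase k :=
    fun j hj => by grind
  have hk_mem : k ∈ Finset.univ.filter fun j => a j = w := by simp [w]
  have hF_card : F.ncard < Nat.card (Fin 3) := by
    calc F.ncard ≤ (G.neighborSet w).ncard + (S.filter fun j => a j = w).card := by
          refine (Set.ncard_union_le _ _).trans (add_le_add ?_ ?_)
          · exact (hc.injOn_neighborSet w).ncard_image.le
          · exact (Set.ncard_image_le (Finset.finite_toSet _)).trans (Set.ncard_coe_finset _).le
      _ < 3 := by
          have := Finset.card_le_card hS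
          rw [Finset.card_erase_of_mem hk_mem] at this
          have := Finset.card_pos.mpr ⟨k, hk_mem⟩
          have := hdeg w
          omega
      _ = Nat.card (Fin 3) := by simp
  obtain ⟨x, hx⟩ : ∃ x, x ∉ F := by
    by_contra! h
    exact hF_card.ne (by rw [Set.eq_univ_of_forall h, Set.ncard_univ])
  exact ⟨x, fun u hu h => hx (Or.inl ⟨u, hu, h⟩),
    fun j hj hj' h => hx (Or.inr ⟨j, by simp [hj, hj'], h⟩)⟩

theorem exists_update_insert
    (hdeg : ∀ w, (G.neighborSet w).ncard + (Finset.univ.filter fun i => a i = w).card ≤ 3)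
    (hc : IsProper3EdgeColoring G c) (hd : DanglingCompatible G a c S d) {k : ι} (hk : k ∉ S) :
    ∃ x, DanglingCompatible G a c (insert k S) (Function.update d k x) := by
  obtain ⟨x, hx_edge, hx_dangling⟩ := exists_color_ne_of_notMem (d := d) hdeg hc hk
  have hd_ne : ∀ j ∈ S, a j = a k → x ≠ d j := fun j hj hj' => (hx_dangling j hj hj').symm
  have hupd : ∀ i ∈ S, Function.update d k x i = d i := fun i hi =>
    Function.update_of_ne (ne_of_mem_of_not_mem hi hk) _ _
  refine ⟨x, ?_, ?_⟩
  · rintro e he i hi hie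
    rcases Finset.mem_insert.mp hi with rfl | hiS
    · obtain ⟨u, rfl⟩ : ∃ u, e = s(a i, u) := Sym2.mem_iff_exists.mp hie
      rw [Function.update_self]
      exact hx_edge u he
    · rw [hupd i hiS]
      exact hd.1 e he i hiS hie
  · rintro i hi j hj hij haij
    rcases Finset.mem_insert.mp hi with rfl | hiS <;> rcases Finset.mem_insert.mp hj with rfl | hjS
    · exact absurd rfl hij
    · rw [Function.update_self, hupd j hjS]
      exact hd_ne j hjS haij.symm
    · rw [Function.update_self, hupd i hiS]
      exact (hd_ne i hiS haij).symm
    · rw [hupd i hiS, hupd j hjS]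
      exact hd.2 i hiS j hjS hij haij

theorem exists_extension
    (hdeg : ∀ w, (G.neighborSet w).ncard + (Finset.univ.filter fun i => a i = w).card ≤ 3)
    (hc : IsProper3EdgeColoring G c) (hd : DanglingCompatible G a c S d) :
    ∃ d' : ι → Fin 3, (∀ i ∈ S, d' i = d i) ∧ DanglingCompatible G a c Finset.univ d' := by
  suffices ∀ T : Finset ι, ∃ d' : ι → Fin 3,
      (∀ i ∈ S, d' i = d i) ∧ DanglingCompatible G a c (S ∪ T) d' by
    simpa only [Finset.union_eq_right.mpr (Finset.subset_univ S)] using this Finset.univ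
  intro T
  induction T using Finset.induction_on with
  | empty => exact ⟨d, fun _ _ => rfl, by simpa using hd⟩
  | insert k T _ ih =>
    obtain ⟨d', hd'S, hd'⟩ := ih
    rw [Finset.union_insert]
    by_cases hk : k ∈ S ∪ T
    · exact ⟨d', hd'S, by rwa [Finset.insert_eq_of_mem hk]⟩
    obtain ⟨x, hx⟩ := hd'.exists_update_insert hdeg hc hk
    refine ⟨Function.update d' k x, fun i hi => ?_, hx⟩
    rw [Function.update_of_ne (by grind)]
    exact hd'S i hi

end DanglingCompatible

namespace twoCopies

def copy {V₁ : Type*} (G₁ : SimpleGraph V₁) (ae₁ af₁ : V₁) (i : Bool) :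
    G₁ ↪g twoCopies G₁ ae₁ af₁ where
  toFun x := .inl (x, i)
  inj' x y h := by simpa using h
  map_rel_iff' {x y} := by
    change (i = i ∧ G₁.Adj x y) ∨ (i ≠ i ∧ x = af₁ ∧ y = af₁) ↔ G₁.Adj x y
    simp

def attachEdge {V₁ : Type*} (ae₁ : V₁) (i : Bool) : Sym2 (V₁ × Bool ⊕ Unit) :=
  s(.inl (ae₁, i), .inr ())

def bridgeEdge {V₁ : Type*} (af₁ : V₁) : Sym2 (V₁ × Bool ⊕ Unit) :=
  s(.inl (af₁, true), .inl (af₁, false))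

variable {V₁ : Type*} {G₁ : SimpleGraph V₁} {ae₁ af₁ : V₁}

@[simp]
theorem copy_apply (i : Bool) (x : V₁) : copy G₁ ae₁ af₁ i x = .inl (x, i) := rfl

theorem attachEdge_mem_edgeSet (i : Bool) :
    attachEdge ae₁ i ∈ (twoCopies G₁ ae₁ af₁).edgeSet := by
  simp [attachEdge, twoCopies]

theorem bridgeEdge_mem_edgeSet : bridgeEdge af₁ ∈ (twoCopies G₁ ae₁ af₁).edgeSet := by
  simp [bridgeEdge, twoCopies]

theorem mem_bridgeEdge (i : Bool) : .inl (af₁, i) ∈ bridgeEdge af₁ := by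
  cases i <;> simp [bridgeEdge]

theorem map_copy_ne_attachEdge (e : Sym2 V₁) (i j : Bool) :
    e.map (copy G₁ ae₁ af₁ i) ≠ attachEdge ae₁ j := by
  intro h
  have hv : (.inr () : V₁ × Bool ⊕ Unit) ∈ e.map (copy G₁ ae₁ af₁ i) := by
    rw [h]; exact Sym2.mem_mk_right _ _
  obtain ⟨x, -, hx⟩ := Sym2.mem_map.mp hv
  cases hx

theorem map_copy_ne_bridgeEdge (e : Sym2 V₁) (i : Bool) :
    e.map (copy G₁ ae₁ af₁ i) ≠ bridgeEdge af₁ := by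
  intro h
  have hv : (.inl (af₁, !i) : V₁ × Bool ⊕ Unit) ∈ e.map (copy G₁ ae₁ af₁ i) := by
    rw [h]; exact mem_bridgeEdge (!i)
  obtain ⟨x, -, hx⟩ := Sym2.mem_map.mp hv
  simp at hx

theorem attachEdge_ne_bridgeEdge (i : Bool) : attachEdge ae₁ i ≠ bridgeEdge af₁ := by
  simp [attachEdge, bridgeEdge]

theorem danglingCompatible_copy {c : Sym2 (V₁ × Bool ⊕ Unit) → Fin 3}
    (hc : IsProper3EdgeColoring (twoCopies G₁ ae₁ af₁) c) (ae₂ af₂ : V₁) (i : Bool) :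
    DanglingCompatible G₁ ![ae₁, ae₂, af₁, af₂] (c ∘ Sym2.map (copy G₁ ae₁ af₁ i))
      {0, 2} ![c (attachEdge ae₁ i), 0, c (bridgeEdge af₁), 0] := by
  constructor
  · intro e he j hj hje
    have he' : e.map (copy G₁ ae₁ af₁ i) ∈ (twoCopies G₁ ae₁ af₁).edgeSet :=
      (copy G₁ ae₁ af₁ i).toHom.map_mem_edgeSet he
    have hmem : .inl (![ae₁, ae₂, af₁, af₂] j, i) ∈ e.map (copy G₁ ae₁ af₁ i) :=
      Sym2.mem_map.mpr ⟨_, hje, rfl⟩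
    simp only [Finset.mem_insert, Finset.mem_singleton] at hj
    rcases hj with rfl | rfl
    · exact hc _ he' _ (attachEdge_mem_edgeSet i) (map_copy_ne_attachEdge e i i)
        ⟨_, hmem, Sym2.mem_mk_left _ _⟩
    · exact hc _ he' _ bridgeEdge_mem_edgeSet (map_copy_ne_bridgeEdge e i)
        ⟨_, hmem, mem_bridgeEdge i⟩
  · have hne (h : ae₁ = af₁) : c (attachEdge ae₁ i) ≠ c (bridgeEdge af₁) :=
      hc _ (attachEdge_mem_edgeSet i) _ bridgeEdge_mem_edgeSet (attachEdge_ne_bridgeEdge i)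
        ⟨.inl (ae₁, i), Sym2.mem_mk_left _ _, h ▸ mem_bridgeEdge i⟩
    intro j hj k hk hjk hajk
    simp only [Finset.mem_insert, Finset.mem_singleton] at hj hk
    rcases hj with rfl | rfl <;> rcases hk with rfl | rfl
    · exact absurd rfl hjk
    · exact hne hajk
    · exact (hne hajk.symm).symm
    · exact absurd rfl hjk

theorem color_attachEdge_eq_color_bridgeEdge [DecidableEq V₁] {ae₂ af₂ : V₁}
    (hdeg : ∀ w, (G₁.neighborSet w).ncard
      + (Finset.univ.filter fun j : Fin 4 => ![ae₁, ae₂, af₁, af₂] j = w).card ≤ 3)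
    (hsame : ∀ c d, IsProper3EdgeColoring G₁ c →
      DanglingCompatible G₁ ![ae₁, ae₂, af₁, af₂] c Finset.univ d → d 0 = d 2)
    {c : Sym2 (V₁ × Bool ⊕ Unit) → Fin 3} (hc : IsProper3EdgeColoring (twoCopies G₁ ae₁ af₁) c)
    (i : Bool) : c (attachEdge ae₁ i) = c (bridgeEdge af₁) := by
  have hcᵢ := hc.comap (copy G₁ ae₁ af₁ i)
  obtain ⟨d, hd_eq, hd⟩ := (danglingCompatible_copy hc ae₂ af₂ i).exists_extension hdeg hcᵢ
  simpa [hd_eq] using hsame _ d hcᵢ hd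

end twoCopies

open twoCopies in
theorem stmt_13_general {V₁ : Type*} [DecidableEq V₁] (G₁ : SimpleGraph V₁)
    (ae₁ ae₂ af₁ af₂ : V₁)
    (hpole : ∀ w, (G₁.neighborSet w).ncard
      + (Finset.univ.filter fun i : Fin 4 => ![ae₁, ae₂, af₁, af₂] i = w).card = 3)
    (hsame : ∀ (c : Sym2 V₁ → Fin 3) (c₁ c₂ c₃ c₄ : Fin 3),
      IsProper3EdgeColoring G₁ c →
      (∀ e ∈ G₁.edgeSet, ∀ i : Fin 4,
        ![ae₁, ae₂, af₁, af₂] i ∈ e → c e ≠ ![c₁, c₂, c₃, c₄] i) →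
      (∀ i j : Fin 4, i ≠ j → ![ae₁, ae₂, af₁, af₂] i = ![ae₁, ae₂, af₁, af₂] j →
        ![c₁, c₂, c₃, c₄] i ≠ ![c₁, c₂, c₃, c₄] j) →
      c₁ = c₃) :
    ¬ Is3EdgeColorable (twoCopies G₁ ae₁ af₁) := by
  rintro ⟨c, hc⟩
  have hsame_dangling : ∀ c d, IsProper3EdgeColoring G₁ c →
      DanglingCompatible G₁ ![ae₁, ae₂, af₁, af₂] c Finset.univ d → d 0 = d 2 := by
    intro c d hc ⟨hedge, hpair⟩
    have hd : ![d 0, d 1, d 2, d 3] = d := by ext j; fin_cases j <;> rfl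
    refine hsame c (d 0) (d 1) (d 2) (d 3) hc ?_ ?_ <;> rw [hd]
    · exact fun e he j => hedge e he j (Finset.mem_univ j)
    · exact fun j k => hpair j (Finset.mem_univ j) k (Finset.mem_univ k)
  have hcolor := color_attachEdge_eq_color_bridgeEdge (fun w => (hpole w).le) hsame_dangling hc
  refine hc _ (attachEdge_mem_edgeSet true) _ (attachEdge_mem_edgeSet false) (by simp [attachEdge])
    ⟨.inr (), Sym2.mem_mk_right _ _, Sym2.mem_mk_right _ _⟩ ?_
  rw [hcolor, hcolor]

/-- if in every proper 3-edge-colouring of the 4-pole `G₁` (with dangling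
edges e₁, e₂, f₁, f₂ attached at ae₁, ae₂, af₁, af₂) the dangling edges e₁ and f₁
receive the same colour, then the graph `H` obtained from two copies of the pole by
identifying the f₁-edges and attaching both e₁-edges to a new vertex is not properly
3-edge-colourable, i.e. has resistance at least 1. -/
theorem stmt_13 {V₁ : Type*} [Fintype V₁] [DecidableEq V₁] (G₁ : SimpleGraph V₁)
    (ae₁ ae₂ af₁ af₂ : V₁)
    (hpole : ∀ w, (G₁.neighborSet w).ncard
      + (Finset.univ.filter fun i : Fin 4 => ![ae₁, ae₂, af₁, af₂] i = w).card = 3)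
    (hsame : ∀ (c : Sym2 V₁ → Fin 3) (c₁ c₂ c₃ c₄ : Fin 3),
      IsProper3EdgeColoring G₁ c →
      (∀ e ∈ G₁.edgeSet, ∀ i : Fin 4,
        ![ae₁, ae₂, af₁, af₂] i ∈ e → c e ≠ ![c₁, c₂, c₃, c₄] i) →
      (∀ i j : Fin 4, i ≠ j → ![ae₁, ae₂, af₁, af₂] i = ![ae₁, ae₂, af₁, af₂] j →
        ![c₁, c₂, c₃, c₄] i ≠ ![c₁, c₂, c₃, c₄] j) →
      c₁ = c₃) :
    ¬ Is3EdgeColorable (twoCopies G₁ ae₁ af₁) :=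
  stmt_13_general G₁ ae₁ ae₂ af₁ af₂ hpole hsame
end
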